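/- arXiv:1803.05721 — 2 statements merged into one kernel-verified Lean document; each statement's English description precedes it below -/
import Mathlib

section
/- Let R be a commutative ring, n ≥ 3, and 1 ≤ i < j ≤ n, ξ ∈ R. Then in GL_N(R) (rows and columns indexed by 2-element subsets of [n]) the exterior square of an elementary transvection decomposes as the product ∧²t_{i,j}(ξ) = ∏_{k=1}^{i−1} t_{{k,i},{k,j}}(ξ) · ∏_{l=i+1}^{j−1} t_{{i,l},{l,j}}(−ξ) · ∏_{m=j+1}^{n} t_{{i,m},{j,m}}(ξ) of elementary transvections of GL_N(R). -/
open Finset MvPolynomial Matrix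

/-- `V n` is the set `∧²[n]` of 2-element subsets of `[n] = {1, …, n}`
(modelled on `Fin n`). -/
abbrev V (n : ℕ) := {I : Finset (Fin n) // I.card = 2}

/-- The variable `x_S` of the polynomial ring `R[x_I : I ∈ ∧²[n]]`
(interpreted as `0` if `S` is not a 2-element set, a case which never occurs below). -/
noncomputable def var2 (R : Type*) [CommRing R] (n : ℕ) (S : Finset (Fin n)) :
    MvPolynomial (V n) R :=
  if h : S.card = 2 then MvPolynomial.X ⟨S, h⟩ else 0

/-- The Plücker polynomial `f_{i,J} = Σ_{h=1}^{3} (−1)^h x_{{i,j_h}} x_{J∖{j_h}}`,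
where `J = {j₁ < j₂ < j₃}`; the exponent `h` is recovered as the number of elements
of `J` that are `≤ j_h`. -/
noncomputable def pluckerPoly (R : Type*) [CommRing R] (n : ℕ) (i : Fin n)
    (J : Finset (Fin n)) : MvPolynomial (V n) R :=
  ∑ j ∈ J, ((-1 : ℤ) ^ (J.filter (fun a => a ≤ j)).card) •
    (var2 R n {i, j} * var2 R n (J.erase j))

/-- The Plücker ideal `Plu(n,R)`, generated by all Plücker polynomials. -/
noncomputable def pluIdeal (R : Type*) [CommRing R] (n : ℕ) :
    Ideal (MvPolynomial (V n) R) :=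
  Ideal.span {p | ∃ (i : Fin n) (J : Finset (Fin n)), i ∉ J ∧ J.card = 3 ∧
    p = pluckerPoly R n i J}

/-- `sign(I,J)`: the sign of the permutation sorting the concatenation of the increasing
lists of `I` and of `J` into increasing order, computed as `(−1)^(number of inversions)`. -/
def signIJ {n : ℕ} (I J : Finset (Fin n)) : ℤ :=
  (-1) ^ (((I ×ˢ J).filter (fun p => p.2 < p.1)).card)

/-- The smaller element of a 2-element subset. -/
def lo {n : ℕ} (I : V n) : Fin n :=
  I.1.min' (Finset.card_pos.mp (by rw [I.2]; norm_num))

/-- The larger element of a 2-element subset. -/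
def hi {n : ℕ} (I : V n) : Fin n :=
  I.1.max' (Finset.card_pos.mp (by rw [I.2]; norm_num))

/-- The exterior square (Cauchy–Binet) of a matrix: the `N×N` matrix, indexed by
2-element subsets, whose entry at `({i₁<i₂},{j₁<j₂})` is
`x_{i₁j₁}x_{i₂j₂} − x_{i₁j₂}x_{i₂j₁}`. -/
def wedge {R : Type*} [CommRing R] {n : ℕ} (x : Matrix (Fin n) (Fin n) R) :
    Matrix (V n) (V n) R :=
  fun I J => x (lo I) (lo J) * x (hi I) (hi J) - x (lo I) (hi J) * x (hi I) (lo J)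

/-- The elementary transvection `t_{S,T}(ξ) = e + ξ·e_{S,T}` of `GL_N(R)`, for distinct
2-element subsets `S, T` (interpreted as the identity in the degenerate cases, which
never occur below). -/
def transvN (R : Type*) [CommRing R] (n : ℕ) (S T : Finset (Fin n)) (ξ : R) :
    Matrix (V n) (V n) R :=
  if h : S.card = 2 ∧ T.card = 2 ∧ S ≠ T then
    1 + Matrix.single ⟨S, h.1⟩ ⟨T, h.2.1⟩ ξ
  else 1

/-- The exterior number `a_{A,C}^H(g) = Σ_{(B,D)} sign(B,D)·g_{A,B}·g_{C,D}`, the sum over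
all ordered pairs `(B,D)` of disjoint 2-element subsets with `B ∪ D = H`. -/
def extNum {R : Type*} [CommRing R] {n : ℕ} (g : Matrix (V n) (V n) R)
    (H : Finset (Fin n)) (A C : V n) : R :=
  ∑ B : V n, ∑ D : V n,
    if B.1 ∩ D.1 = ∅ ∧ B.1 ∪ D.1 = H then (signIJ B.1 D.1 : R) * (g A B * g C D) else 0

/-- The 4×4 minor `M_I^J(x)` with rows `I` and columns `J` (both 4-element sets). -/
noncomputable def minor4 {R : Type*} [CommRing R] {n : ℕ}
    (x : Matrix (Fin n) (Fin n) R) (I J : Finset (Fin n)) : R :=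
  if h : I.card = 4 ∧ J.card = 4 then
    Matrix.det (Matrix.of fun a b : Fin 4 =>
      x ↑(I.orderIsoOfFin h.1 a) ↑(J.orderIsoOfFin h.2 b))
  else 0

/-- The elementary group `E(n,R)`: the subgroup of `GL_n(R)` generated by the elementary
transvections `t_{i,j}(ξ) = e + ξ·e_{i,j}`, `i ≠ j`. -/
def elemGroup (R : Type*) [CommRing R] (n : ℕ) :
    Subgroup (Matrix.GeneralLinearGroup (Fin n) R) :=
  Subgroup.closure {x | ∃ (i j : Fin n) (ξ : R), i ≠ j ∧
    (x : Matrix (Fin n) (Fin n) R) = 1 + Matrix.single i j ξ}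

/-- `g` satisfies the exterior-number conditions with witness `θ`. -/
def extCond {R : Type*} [CommRing R] {n : ℕ} (g : Matrix (V n) (V n) R)
    (θ : Finset (Fin n) → Finset (Fin n) → R) : Prop :=
  ∀ H : Finset (Fin n), H.card = 4 → ∀ A C : V n,
    (¬ Disjoint A.1 C.1 → extNum g H A C = 0) ∧
    (Disjoint A.1 C.1 → extNum g H A C = (signIJ A.1 C.1 : R) * θ (A.1 ∪ C.1) H)

/-- The symmetric matrix `B_𝓘` with `(B_𝓘)_{M,L} = sign(M,L)` if `M ⊔ L = 𝓘`
and `0` otherwise. -/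
def bMat (R : Type*) [CommRing R] (n : ℕ) (𝓘 : Finset (Fin n)) :
    Matrix (V n) (V n) R :=
  fun M L => if M.1 ∩ L.1 = ∅ ∧ M.1 ∪ L.1 = 𝓘 then (signIJ M.1 L.1 : R) else 0

/-!
Every factor on the right is `e + ξ' e_{S,T}` with `i ∈ S` and `i ∉ T`. Matrices whose nonzero
entries lie in rows containing `i` and in columns avoiding `i` multiply to zero, so the product
collapses to `e + Σ ξ' e_{S,T}`. Expanding the `2 × 2` minors of `e + ξ e_{i,j}` shows that
`∧²t_{i,j}(ξ) - e` has exactly the entries `±ξ` at `({i,k},{j,k})`, with the sign `-` exactly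
when `i < k < j`.
-/

theorem List.prod_eq_one_add_sum_sub_one {M : Type*} [Ring M] {s : Set M}
    (hs : ∀ x ∈ s, ∀ y ∈ s, x * y = 0) {l : List M} (hl : ∀ x ∈ l, x - 1 ∈ s) :
    l.prod = 1 + (l.map (· - 1)).sum := by
  induction l with
  | nil => simp
  | cons x l ih =>
    have hx : (x - 1) * (l.map (· - 1)).sum = 0 := by
      rw [← List.sum_map_mul_left]
      exact List.sum_eq_zero fun z hz => by
        obtain ⟨y, hy, rfl⟩ := List.mem_map.mp hz
        exact hs _ (hl x (by simp)) _ (hl y (by simp [hy]))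
    rw [List.prod_cons, ih fun y hy => hl y (by simp [hy]), List.map_cons, List.sum_cons]
    calc x * (1 + (l.map (· - 1)).sum) = (1 + (x - 1)) * (1 + (l.map (· - 1)).sum) := by abel_nf
      _ = _ := by rw [add_mul, one_mul, mul_add (x - 1), mul_one, hx]; abel

theorem Matrix.mul_eq_zero_of_disjoint_support {l m o α : Type*} [Fintype m]
    [NonUnitalNonAssocSemiring α] (p : m → Prop) {N : Matrix l m α} {M : Matrix m o α}
    (hN : ∀ a k, N a k ≠ 0 → ¬ p k) (hM : ∀ k b, M k b ≠ 0 → p k) : N * M = 0 := by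
  ext a b
  refine Finset.sum_eq_zero fun k _ => ?_
  by_cases hk : p k
  · exact mul_eq_zero_of_left (not_imp_comm.mp (hN a k) (not_not.mpr hk)) _
  · exact mul_eq_zero_of_right _ (not_imp_comm.mp (hM k b) hk)

theorem List.sum_map_filter_finRange {n : ℕ} {M : Type*} [AddCommMonoid M] (p : Fin n → Prop)
    [DecidablePred p] (f : Fin n → M) :
    (((List.finRange n).filter (fun k => decide (p k))).map f).sum =
      ∑ k ∈ univ.filter p, f k := by
  rw [← List.sum_toFinset _ ((List.nodup_finRange n).filter _), List.toFinset_filter,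
    List.toFinset_finRange]
  simp

section TwoSubsets

variable {n : ℕ}

lemma lo_lt_hi (I : V n) : lo I < hi I :=
  Finset.min'_lt_max'_of_card _ (by rw [I.2]; norm_num)

lemma val_eq_pair_lo_hi (I : V n) : I.1 = {lo I, hi I} :=
  (Finset.eq_of_subset_of_card_le
    (Finset.insert_subset (Finset.min'_mem _ _)
      (Finset.singleton_subset_iff.2 (Finset.max'_mem _ _)))
    (I.2.trans (Finset.card_pair (lo_lt_hi I).ne).symm).le).symm

lemma val_eq_pair_iff {I : V n} {a b : Fin n} (hab : a < b) :
    I.1 = {a, b} ↔ lo I = a ∧ hi I = b := by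
  refine ⟨fun h => ?_, fun h => by rw [val_eq_pair_lo_hi I, h.1, h.2]⟩
  obtain ⟨s, hs⟩ := I
  subst h
  simp [lo, hi, hab.le]

lemma ext_iff_lo_hi {I J : V n} : I = J ↔ lo I = lo J ∧ hi I = hi J := by
  rw [Subtype.ext_iff, val_eq_pair_lo_hi J, val_eq_pair_iff (lo_lt_hi J)]

end TwoSubsets

section Transvections

variable {R : Type*} [CommRing R] {n : ℕ} {i j : Fin n}

lemma transvN_sub_one_apply {S T : Finset (Fin n)} (hST : S ≠ T) (ξ : R) (I J : V n) :
    (transvN R n S T ξ - 1) I J = if I.1 = S ∧ J.1 = T then ξ else 0 := by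
  by_cases h : S.card = 2 ∧ T.card = 2 ∧ S ≠ T
  · rw [transvN, dif_pos h, add_sub_cancel_left, Matrix.single_apply]
    simp only [Subtype.ext_iff, eq_comm]
  · rw [transvN, dif_neg h, sub_self, Matrix.zero_apply, if_neg]
    rintro ⟨rfl, rfl⟩
    exact h ⟨I.2, J.2, hST⟩

lemma transvN_sub_one_apply_ne_zero {S T : Finset (Fin n)} (hS : i ∈ S) (hT : i ∉ T)
    {ξ : R} {I J : V n} (h : (transvN R n S T ξ - 1) I J ≠ 0) : i ∈ I.1 ∧ i ∉ J.1 := by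
  rw [transvN_sub_one_apply (by rintro rfl; exact hT hS)] at h
  obtain ⟨rfl, rfl⟩ := (ite_ne_right_iff.mp h).1
  exact ⟨hS, hT⟩

lemma sum_transvN_sub_one_apply_eq_ite {s : Finset (Fin n)} {S T : Fin n → Finset (Fin n)}
    (hST : ∀ k ∈ s, S k ≠ T k) (c : R) {I J : V n} (a : Fin n) {Q : Prop} [Decidable Q]
    (hIJ : ∀ k ∈ s, I.1 = S k ∧ J.1 = T k ↔ k = a ∧ Q) (ha : Q → a ∈ s) :
    (∑ k ∈ s, (transvN R n (S k) (T k) c - 1)) I J = if Q then c else 0 := by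
  rw [Matrix.sum_apply, Finset.sum_congr rfl fun k hk => by
    rw [transvN_sub_one_apply (hST k hk), if_congr (hIJ k hk) rfl rfl, ite_and]]
  rw [Finset.sum_ite_eq']
  by_cases hQ : Q <;> simp [hQ, ha]

lemma sum_transvN_lower_apply (hij : i < j) (ξ : R) (I J : V n) :
    (∑ k ∈ univ.filter (· < i), (transvN R n {k, i} {k, j} ξ - 1)) I J
      = if hi I = i ∧ lo J = lo I ∧ hi J = j then ξ else 0 := by
  refine sum_transvN_sub_one_apply_eq_ite (fun k hk => ?_) ξ (lo I) (fun k hk => ?_) fun h => ?_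
  all_goals simp only [mem_filter, mem_univ, true_and] at *
  · exact ne_of_mem_of_not_mem' (a := i) (by simp) (by simp [hk.ne', hij.ne])
  · rw [val_eq_pair_iff hk, val_eq_pair_iff (hk.trans hij)]
    grind
  · exact h.1 ▸ lo_lt_hi I

lemma sum_transvN_middle_apply (ξ : R) (I J : V n) :
    (∑ l ∈ univ.filter (fun l => i < l ∧ l < j), (transvN R n {i, l} {l, j} (-ξ) - 1)) I J
      = if lo I = i ∧ lo J = hi I ∧ hi J = j then -ξ else 0 := by
  refine sum_transvN_sub_one_apply_eq_ite (fun l hl => ?_) (-ξ) (hi I) (fun l hl => ?_)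
    fun h => ?_
  all_goals simp only [mem_filter, mem_univ, true_and] at *
  · exact ne_of_mem_of_not_mem' (a := i) (by simp) (by simp [hl.1.ne, (hl.1.trans hl.2).ne])
  · rw [val_eq_pair_iff hl.1, val_eq_pair_iff hl.2]
    grind
  · exact ⟨h.1 ▸ lo_lt_hi I, h.2.1 ▸ h.2.2 ▸ lo_lt_hi J⟩

lemma sum_transvN_upper_apply (hij : i < j) (ξ : R) (I J : V n) :
    (∑ m ∈ univ.filter (j < ·), (transvN R n {i, m} {j, m} ξ - 1)) I J
      = if lo I = i ∧ lo J = j ∧ hi J = hi I then ξ else 0 := by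
  refine sum_transvN_sub_one_apply_eq_ite (fun m hm => ?_) ξ (hi I) (fun m hm => ?_) fun h => ?_
  all_goals simp only [mem_filter, mem_univ, true_and] at *
  · exact ne_of_mem_of_not_mem' (a := i) (by simp) (by simp [hij.ne, (hij.trans hm).ne])
  · rw [val_eq_pair_iff (hij.trans hm), val_eq_pair_iff hm]
    grind
  · exact h.2.1 ▸ h.2.2 ▸ lo_lt_hi J

lemma wedge_one_add_single_apply (hij : i < j) (ξ : R) (I J : V n) :
    wedge (1 + Matrix.single i j ξ) I J = (1 : Matrix (V n) (V n) R) I J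
      + (if hi I = i ∧ lo J = lo I ∧ hi J = j then ξ else 0)
      + (if lo I = i ∧ lo J = hi I ∧ hi J = j then -ξ else 0)
      + (if lo I = i ∧ lo J = j ∧ hi J = hi I then ξ else 0) := by
  have hI := lo_lt_hi I
  have hJ := lo_lt_hi J
  simp only [wedge, Matrix.add_apply, Matrix.one_apply, Matrix.single_apply, ext_iff_lo_hi]
  generalize lo I = a, hi I = b, lo J = c, hi J = d at *
  rcases eq_or_ne i a with rfl | hia
  · simp only [hI.ne', hI.ne, true_and, false_and, if_false, add_zero]
    split_ifs <;> first | omega | ring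
  rcases eq_or_ne i b with rfl | hib
  · simp only [hia, hia.symm, true_and, false_and, if_false, add_zero]
    split_ifs <;> first | omega | ring
  simp only [hia, hib, hia.symm, hib.symm, false_and, if_false, add_zero]
  split_ifs <;> first | omega | ring

end Transvections

theorem stmt4_general (R : Type*) [CommRing R] (n : ℕ)
    (i j : Fin n) (hij : i < j) (ξ : R) :
    wedge (1 + Matrix.single i j ξ) =
      (((List.finRange n).filter (fun k => decide (k < i))).map
          (fun k => transvN R n {k, i} {k, j} ξ)).prod *
      (((List.finRange n).filter (fun l => decide (i < l ∧ l < j))).map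
          (fun l => transvN R n {i, l} {l, j} (-ξ))).prod *
      (((List.finRange n).filter (fun m => decide (j < m))).map
          (fun m => transvN R n {i, m} {j, m} ξ)).prod := by
  rw [← List.prod_append, ← List.prod_append, List.prod_eq_one_add_sum_sub_one
    (s := {X | ∀ I J, X I J ≠ 0 → i ∈ I.1 ∧ i ∉ J.1}) ?squareZero ?support]
  case squareZero =>
    exact fun X hX Y hY => Matrix.mul_eq_zero_of_disjoint_support (fun K : V n => i ∈ K.1)
      (fun _ _ h => (hX _ _ h).2) (fun _ _ h => (hY _ _ h).1)
  case support =>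
    intro x hx I J
    simp only [List.mem_append, List.mem_map, List.mem_filter, List.mem_finRange, true_and,
      decide_eq_true_eq] at hx
    rcases hx with (⟨k, hk, rfl⟩ | ⟨l, ⟨hil, hlj⟩, rfl⟩) | ⟨m, hjm, rfl⟩
    · exact transvN_sub_one_apply_ne_zero (by simp) (by simp [hk.ne', hij.ne])
    · exact transvN_sub_one_apply_ne_zero (by simp) (by simp [hil.ne, (hil.trans hlj).ne])
    · exact transvN_sub_one_apply_ne_zero (by simp) (by simp [hij.ne, (hij.trans hjm).ne])
  ext I J
  simp only [List.map_append, List.sum_append, List.map_map, Function.comp_def,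
    List.sum_map_filter_finRange, Matrix.add_apply, sum_transvN_lower_apply hij,
    sum_transvN_middle_apply, sum_transvN_upper_apply hij, wedge_one_add_single_apply hij]
  ring

/-- for `i < j`, the exterior square of an elementary transvection decomposes
as `∧²t_{i,j}(ξ) = ∏_{k<i} t_{{k,i},{k,j}}(ξ) · ∏_{i<l<j} t_{{i,l},{l,j}}(−ξ) ·
∏_{j<m} t_{{i,m},{j,m}}(ξ)`. -/
theorem stmt4 (R : Type*) [CommRing R] (n : ℕ) (hn : 3 ≤ n)
    (i j : Fin n) (hij : i < j) (ξ : R) :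
    wedge (1 + Matrix.single i j ξ) =
      (((List.finRange n).filter (fun k => decide (k < i))).map
          (fun k => transvN R n {k, i} {k, j} ξ)).prod *
      (((List.finRange n).filter (fun l => decide (i < l ∧ l < j))).map
          (fun l => transvN R n {i, l} {l, j} (-ξ))).prod *
      (((List.finRange n).filter (fun m => decide (j < m))).map
          (fun m => transvN R n {i, m} {j, m} ξ)).prod :=
  stmt4_general R n i j hij ξ
end

section
/- Let R be a commutative ring, n ≥ 4, k ≥ 1, and let x₁, …, x_k be N×N matrices over R indexed by ∧²[n], each satisfying the exterior-number conditions with witness θ_{x_h}. Then for every H ∈ ∧⁴[n] and all disjoint A, C ∈ ∧²[n]: a_{A,C}^H(x₁·x₂·⋯·x_k) = sign(A,C) · Σ_{I₁,…,I_{k−1} ∈ ∧⁴[n]} θ_{x_k}(I₁, H)·θ_{x_{k−1}}(I₂, I₁)·⋯·θ_{x₂}(I_{k−1}, I_{k−2})·θ_{x₁}(A∪C, I_{k−1}). -/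
open Finset MvPolynomial Matrix
open Fin.NatCast

/-! With `B_H = bMat R n H`, the exterior number is the bilinear form
`a^H_{A,C}(g) = (g B_H gᵀ)_{A,C}`, and the exterior-number conditions for `g` say exactly that
`g B_H gᵀ = Σ_{|I| = 4} θ(I, H) B_I`. Hence `a^H(g h) = Σ_I θ_h(I, H) a^I(g)`, and peeling off
the last factor of `x₁ ⋯ x_k` one at a time expands its exterior numbers into the sum over
chains `H = I₀, I₁, …, I_k = A ∪ C`. -/

theorem Fin.natCast_add_one_eq_succ {k t : ℕ} (ht : t < k + 1) :
    ((t + 1 : ℕ) : Fin (k + 2)) = Fin.succ (t : Fin (k + 1)) := by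
  ext
  rw [Fin.val_natCast, Fin.val_succ, Fin.val_natCast, Nat.mod_eq_of_lt ht,
    Nat.mod_eq_of_lt (Nat.succ_lt_succ ht)]

section Chains

variable {α M : Type*} [Fintype α] [DecidableEq α] [CommSemiring M]
  (P : α → Prop) [DecidablePred P]

def chainSum (k : ℕ) (g : ℕ → α → α → M) (a b : α) : M :=
  ∑ c ∈ univ.filter
      (fun c : Fin (k + 1) → α => c 0 = a ∧ c (Fin.last k) = b ∧ ∀ m, P (c m)),
    ∏ t ∈ range k, g t (c ↑(t + 1)) (c ↑t)

theorem chainSum_zero (g : ℕ → α → α → M) (a b : α) :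
    chainSum P 0 g a b = if a = b ∧ P a then 1 else 0 := by
  rw [chainSum, Finset.sum_filter, ← (Equiv.funUnique (Fin 1) α).symm.sum_comp,
    Finset.sum_eq_single a (fun a' _ ha' => if_neg fun h => ha' h.1) (by simp)]
  simp [Fin.last]

theorem chainSum_succ (k : ℕ) (g : ℕ → α → α → M) {a : α} (ha : P a) (b : α) :
    chainSum P (k + 1) g a b =
      ∑ I ∈ univ.filter P, g 0 I a * chainSum P k (fun t => g (t + 1)) I b := by
  simp only [chainSum, Finset.mul_sum]
  rw [Finset.sum_sigma']
  symm
  refine Finset.sum_nbij' (fun p => Fin.cons a p.2) (fun c => ⟨c 1, Fin.tail c⟩) ?_ ?_ ?_ ?_ ?_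
  · rintro ⟨I, c⟩ hc
    simp only [mem_sigma, mem_filter, mem_univ, true_and] at hc ⊢
    obtain ⟨-, rfl, hlast, hP⟩ := hc
    refine ⟨rfl, by rw [← Fin.succ_last, Fin.cons_succ, hlast], Fin.cases ha hP⟩
  · intro c hc
    simp only [mem_sigma, mem_filter, mem_univ, true_and] at hc ⊢
    obtain ⟨-, hlast, hP⟩ := hc
    refine ⟨hP 1, by simp [Fin.tail], by simp [Fin.tail, hlast], fun m => hP m.succ⟩
  · rintro ⟨I, c⟩ hc
    simp only [mem_sigma, mem_filter, mem_univ, true_and] at hc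
    obtain ⟨-, rfl, -⟩ := hc
    rw [← Fin.succ_zero_eq_one, Fin.cons_succ, Fin.tail_cons]
  · intro c hc
    simp only [mem_filter, mem_univ, true_and] at hc
    rw [← hc.1, Fin.cons_self_tail]
  · rintro ⟨I, c⟩ hc
    simp only [mem_sigma, mem_filter, mem_univ, true_and] at hc
    obtain ⟨-, rfl, -⟩ := hc
    rw [prod_range_succ', mul_comm]
    congr 1
    refine prod_congr rfl fun t ht => ?_
    have ht : t < k := mem_range.mp ht
    rw [Fin.natCast_add_one_eq_succ (t := t + 1) (by omega),
      Fin.natCast_add_one_eq_succ (by omega), Fin.cons_succ, Fin.cons_succ]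

end Chains

section ExteriorNumbers

variable {R : Type*} [CommRing R] {n : ℕ}

theorem extNum_eq_mul_bMat_mul_transpose (g : Matrix (V n) (V n) R) (H : Finset (Fin n))
    (A C : V n) : extNum g H A C = (g * bMat R n H * gᵀ) A C := by
  simp only [extNum, bMat, Matrix.mul_apply, Matrix.transpose_apply, Finset.sum_mul, mul_ite,
    ite_mul, mul_zero, zero_mul]
  rw [Finset.sum_comm]
  refine sum_congr rfl fun D _ => sum_congr rfl fun B _ => ?_
  split_ifs <;> ring

theorem extNum_one (H : Finset (Fin n)) (A C : V n) :
    extNum (1 : Matrix (V n) (V n) R) H A C = bMat R n H A C := by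
  rw [extNum_eq_mul_bMat_mul_transpose, transpose_one, Matrix.mul_one, Matrix.one_mul]

theorem mul_bMat_mul_transpose_eq_sum {g : Matrix (V n) (V n) R}
    {θ : Finset (Fin n) → Finset (Fin n) → R} (hg : extCond g θ) {H : Finset (Fin n)}
    (hH : H.card = 4) :
    g * bMat R n H * gᵀ = ∑ I ∈ univ.filter (fun I : Finset (Fin n) => I.card = 4),
      θ I H • bMat R n I := by
  ext M L
  rw [← extNum_eq_mul_bMat_mul_transpose, Matrix.sum_apply]
  simp only [Matrix.smul_apply, bMat, smul_eq_mul, mul_ite, mul_zero]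
  by_cases hML : Disjoint M.1 L.1
  · have hcard : (M.1 ∪ L.1).card = 4 := by rw [card_union_of_disjoint hML, M.2, L.2]
    rw [(hg H hH M L).2 hML, sum_eq_single_of_mem (M.1 ∪ L.1) (by simpa using hcard)
      (fun I _ hI => if_neg fun h => hI h.2.symm),
      if_pos ⟨disjoint_iff_inter_eq_empty.mp hML, rfl⟩, mul_comm]
  · rw [(hg H hH M L).1 hML]
    exact (sum_eq_zero fun I _ => if_neg fun h => hML (disjoint_iff_inter_eq_empty.mpr h.1)).symm

theorem extNum_mul (g : Matrix (V n) (V n) R) {h : Matrix (V n) (V n) R}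
    {θ : Finset (Fin n) → Finset (Fin n) → R} (hh : extCond h θ) {H : Finset (Fin n)}
    (hH : H.card = 4) (A C : V n) :
    extNum (g * h) H A C =
      ∑ I ∈ univ.filter (fun I : Finset (Fin n) => I.card = 4), θ I H * extNum g I A C := by
  have hassoc : g * h * bMat R n H * (g * h)ᵀ = g * (h * bMat R n H * hᵀ) * gᵀ := by
    simp only [transpose_mul, Matrix.mul_assoc]
  simp only [extNum_eq_mul_bMat_mul_transpose, hassoc, mul_bMat_mul_transpose_eq_sum hh hH,
    Matrix.mul_sum, Matrix.sum_mul, Matrix.sum_apply, Matrix.mul_smul, Matrix.smul_mul,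
    Matrix.smul_apply, smul_eq_mul]

theorem extNum_prod_map_range (x : ℕ → Matrix (V n) (V n) R)
    (θ : ℕ → Finset (Fin n) → Finset (Fin n) → R) (k : ℕ)
    (hx : ∀ a < k, extCond (x a) (θ a)) {H : Finset (Fin n)} (hH : H.card = 4) {A C : V n}
    (hAC : Disjoint A.1 C.1) :
    extNum ((List.range k).map x).prod H A C =
      signIJ A.1 C.1 * chainSum (fun I : Finset (Fin n) => I.card = 4) k
        (fun t => θ (k - 1 - t)) H (A.1 ∪ C.1) := by
  induction k generalizing H with
  | zero =>
    simp [extNum_one, bMat, chainSum_zero, disjoint_iff_inter_eq_empty.mp hAC, hH, eq_comm]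
  | succ k ih =>
    have hθ : (fun t => θ (k + 1 - 1 - (t + 1))) = fun t => θ (k - 1 - t) :=
      funext fun t => by congr 1; omega
    rw [List.range_succ, List.map_append, List.prod_append, List.map_singleton,
      List.prod_singleton, extNum_mul _ (hx k k.lt_succ_self) hH,
      chainSum_succ (fun I : Finset (Fin n) => I.card = 4) _ _ hH, hθ, mul_sum]
    refine sum_congr rfl fun I hI => ?_
    rw [ih (fun a ha => hx a (by omega)) (mem_filter.mp hI).2]
    simp only [add_tsub_cancel_right, tsub_zero]
    ring

end ExteriorNumbers

/-- The chains `I₀ = H, I₁, …, I_{k−1}, I_k = A∪C` of 4-element subsets are encoded as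
functions `c : Fin (k+1) → Finset (Fin n)` with `c 0 = H` and `c k = A ∪ C`; the term of
the sum is `∏_{t=0}^{k−1} θ_{x_{k−1−t}}(I_{t+1}, I_t)` (with `x`'s numbered from `0`). -/
theorem stmt13_general (R : Type*) [CommRing R] (n : ℕ) (k : ℕ)
    (x : ℕ → Matrix (V n) (V n) R) (θ : ℕ → Finset (Fin n) → Finset (Fin n) → R)
    (hx : ∀ a < k, extCond (x a) (θ a)) :
    ∀ H : Finset (Fin n), H.card = 4 → ∀ A C : V n, Disjoint A.1 C.1 →
      extNum (((List.range k).map x).prod) H A C =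
        (signIJ A.1 C.1 : R) *
          ∑ c ∈ Finset.univ.filter (fun c : Fin (k + 1) → Finset (Fin n) =>
              c 0 = H ∧ c (Fin.last k) = A.1 ∪ C.1 ∧ ∀ m, (c m).card = 4),
            ∏ t ∈ Finset.range k, θ (k - 1 - t) (c ↑(t + 1)) (c ↑t) :=
  fun _ hH _ _ hAC => extNum_prod_map_range x θ k hx hH hAC

/-- exterior numbers of a product `x₁·x₂·⋯·x_k` of matrices satisfying the
exterior-number conditions with witnesses `θ 0, …, θ (k−1)`:
`a_{A,C}^H(x₁⋯x_k) = sign(A,C)·Σ_{I₁,…,I_{k−1} ∈ ∧⁴[n]}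
θ_{x_k}(I₁,H)·θ_{x_{k−1}}(I₂,I₁)·⋯·θ_{x₁}(A∪C,I_{k−1})`.
The chains `I₀ = H, I₁, …, I_{k−1}, I_k = A∪C` of 4-element subsets are encoded as
functions `c : Fin (k+1) → Finset (Fin n)` with `c 0 = H` and `c k = A ∪ C`; the term of
the sum is `∏_{t=0}^{k−1} θ_{x_{k−1−t}}(I_{t+1}, I_t)` (with `x`'s numbered from `0`). -/
theorem stmt13 (R : Type*) [CommRing R] (n : ℕ) (hn : 4 ≤ n) (k : ℕ) (hk : 1 ≤ k)
    (x : ℕ → Matrix (V n) (V n) R) (θ : ℕ → Finset (Fin n) → Finset (Fin n) → R)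
    (hx : ∀ a < k, extCond (x a) (θ a)) :
    ∀ H : Finset (Fin n), H.card = 4 → ∀ A C : V n, Disjoint A.1 C.1 →
      extNum (((List.range k).map x).prod) H A C =
        (signIJ A.1 C.1 : R) *
          ∑ c ∈ Finset.univ.filter (fun c : Fin (k + 1) → Finset (Fin n) =>
              c 0 = H ∧ c (Fin.last k) = A.1 ∪ C.1 ∧ ∀ m, (c m).card = 4),
            ∏ t ∈ Finset.range k, θ (k - 1 - t) (c ↑(t + 1)) (c ↑t) :=
  stmt13_general R n k x θ hx
end
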